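/- arXiv:2311.12428 — 2 statements merged into one kernel-verified Lean document; each statement's English description precedes it below -/
import Mathlib

section
/- For any second countable locally compact Hausdorff étale groupoid 𝒢, one has C*_{B(𝒢)}(𝒢) = C*(𝒢). In particular, every unitary representation π of 𝒢 is a B(𝒢)-representation: for any orthonormal fundamental sequence {f_n} of the Borel Hilbert bundle 𝒢⁽⁰⁾*H_π, each function x ↦ ⟨π(x)f_n(s(x)), f_m(r(x))⟩ is a bounded Borel function. -/
open scoped BigOperators ComplexConjugate ENNReal NNReal
open MeasureTheory Filter Topology

noncomputable section

instance : Fact ((1 : ℝ≥0∞) ≤ 2) := ⟨one_le_two⟩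

/-- The ambient separable Hilbert space `ℓ²(ℕ, ℂ)`, in which the fibres of any
Borel Hilbert bundle with a fundamental sequence may be realized. -/
abbrev Hamb : Type := lp (fun _ : ℕ => ℂ) 2

instance : MeasurableSpace Hamb := borel _
instance : BorelSpace Hamb := ⟨rfl⟩

/-- A bounded complex-valued function. -/
def BddFun {X : Type} (f : X → ℂ) : Prop := ∃ M : ℝ, ∀ x, ‖f x‖ ≤ M

/-- A (second countable locally compact Hausdorff) étale groupoid: a groupoid structure
on `G` (with total operations, the product being meaningful on composable pairs
`s x = r y`), such that inversion and multiplication are continuous and the range map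
is a local homeomorphism.  The standing topological assumptions (Hausdorff, second
countable, locally compact) are imposed as typeclass assumptions in the theorems. -/
structure EtaleGroupoid (G : Type) [TopologicalSpace G] where
  mul : G → G → G
  inv : G → G
  r : G → G
  s : G → G
  r_def : ∀ x, r x = mul x (inv x)
  s_def : ∀ x, s x = mul (inv x) x
  inv_inv : ∀ x, inv (inv x) = x
  s_inv : ∀ x, s (inv x) = r x
  mul_assoc' : ∀ x y z, s x = r y → s y = r z → mul (mul x y) z = mul x (mul y z)
  r_mul : ∀ x y, s x = r y → r (mul x y) = r x
  s_mul : ∀ x y, s x = r y → s (mul x y) = s y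
  inv_mul_cancel' : ∀ x y, s x = r y → mul (inv x) (mul x y) = y
  mul_inv_cancel' : ∀ x y, s x = r y → mul (mul x y) (inv y) = x
  continuous_inv : Continuous inv
  continuous_r : Continuous r
  continuous_s : Continuous s
  continuous_mul : ∀ x y : G, s x = r y → ∀ W : Set G, IsOpen W → mul x y ∈ W →
    ∃ U V : Set G, IsOpen U ∧ IsOpen V ∧ x ∈ U ∧ y ∈ V ∧
      ∀ x' ∈ U, ∀ y' ∈ V, s x' = r y' → mul x' y' ∈ W
  etale : ∀ x : G, ∃ U : Set G, IsOpen U ∧ x ∈ U ∧ Set.InjOn r U ∧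
    ∀ V : Set G, V ⊆ U → IsOpen V → IsOpen (r '' V)

namespace EtaleGroupoid

variable {G : Type} [TopologicalSpace G] [MeasurableSpace G]

/-- The unit space `𝒢⁽⁰⁾`. -/
def units (g : EtaleGroupoid G) : Set G := Set.range g.r

/-- The range fibre `𝒢^u = r⁻¹(u)`. -/
def rFiber (g : EtaleGroupoid G) (u : G) : Set G := {x | g.r x = u}

/-- The source fibre `𝒢_u = s⁻¹(u)`. -/
def sFiber (g : EtaleGroupoid G) (u : G) : Set G := {x | g.s x = u}

/-- Membership in `C_c(𝒢)`: continuous with compact support. -/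
def IsCc (_g : EtaleGroupoid G) (f : G → ℂ) : Prop := Continuous f ∧ HasCompactSupport f

/-- Convolution: `(f * h)(x) = Σ_{y ∈ 𝒢^{r(x)}} f(y) h(y⁻¹ x)`. -/
def conv (g : EtaleGroupoid G) (f h : G → ℂ) : G → ℂ :=
  fun x => ∑' y : g.rFiber (g.r x), f (y : G) * h (g.mul (g.inv (y : G)) x)

/-- The involution `f^*(x) = conj (f (x⁻¹))`. -/
def star' (g : EtaleGroupoid G) (f : G → ℂ) : G → ℂ := fun x => conj (f (g.inv x))

/-- Iterated convolution powers: `convIter g h n = h^{*(n+1)}`. -/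
def convIter (g : EtaleGroupoid G) (h : G → ℂ) : ℕ → G → ℂ
  | 0 => h
  | n + 1 => g.conv (convIter g h n) h

/-- `B(𝒢)`: bounded Borel functions. -/
def BG (_g : EtaleGroupoid G) : Set (G → ℂ) := {f | Measurable f ∧ BddFun f}

/-- `B_c(𝒢)`: compactly supported bounded Borel functions. -/
def Bc (_g : EtaleGroupoid G) : Set (G → ℂ) :=
  {f | Measurable f ∧ BddFun f ∧ HasCompactSupport f}

/-- `B_{0,l}(𝒢)`: bounded Borel functions which are locally `B₀`, i.e. whose
restriction to `𝒢(K)` vanishes at infinity for every compact `K ⊆ 𝒢⁽⁰⁾`. -/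
def B0l (g : EtaleGroupoid G) : Set (G → ℂ) :=
  {f | Measurable f ∧ BddFun f ∧
    ∀ K : Set G, K ⊆ g.units → IsCompact K → ∀ ε : ℝ, 0 < ε →
      ∃ C : Set G, IsCompact C ∧ ∀ x : G, g.r x ∈ K → g.s x ∈ K → x ∉ C → ‖f x‖ < ε}

/-- An algebraic ideal `D ⊴ B(𝒢)`. -/
structure IsBorelIdeal (g : EtaleGroupoid G) (D : Set (G → ℂ)) : Prop where
  subset_BG : D ⊆ g.BG
  add_mem : ∀ f ∈ D, ∀ h ∈ D, f + h ∈ D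
  smul_mem : ∀ f ∈ D, ∀ c : ℂ, c • f ∈ D
  mul_mem : ∀ f ∈ D, ∀ h ∈ g.BG, h * f ∈ D

/-- A positive definite function on the groupoid. -/
def IsPosDef (g : EtaleGroupoid G) (F : G → ℂ) : Prop :=
  ∀ u ∈ g.units, ∀ n : ℕ, ∀ x : Fin n → G, (∀ i, x i ∈ g.rFiber u) → ∀ c : Fin n → ℂ,
    0 ≤ (∑ i, ∑ j, conj (c i) * c j * F (g.mul (g.inv (x i)) (x j))).re ∧
    (∑ i, ∑ j, conj (c i) * c j * F (g.mul (g.inv (x i)) (x j))).im = 0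

/-- A function is locally `C₀` (in norm) : restriction to `𝒢(K)` vanishes at
infinity for every compact `K ⊆ 𝒢⁽⁰⁾`. -/
def IsLocallyC0 (g : EtaleGroupoid G) (F : G → ℂ) : Prop :=
  ∀ K : Set G, K ⊆ g.units → IsCompact K → ∀ ε : ℝ, 0 < ε →
    ∃ C : Set G, IsCompact C ∧ ∀ x : G, g.r x ∈ K → g.s x ∈ K → x ∉ C → ‖F x‖ < ε

/-- The Haagerup property for an étale groupoid. -/
def HaagerupProperty (g : EtaleGroupoid G) : Prop :=
  ∃ F : ℕ → G → ℂ, (∀ n, Continuous (F n)) ∧ (∀ n, g.IsPosDef (F n)) ∧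
    (∀ n, ∀ u ∈ g.units, F n u = 1) ∧
    (∀ K : Set G, IsCompact K → ∀ ε : ℝ, 0 < ε →
      ∃ N : ℕ, ∀ n : ℕ, N ≤ n → ∀ x ∈ K, ‖F n x - 1‖ < ε) ∧
    (∀ n, Continuous (F n) ∧ g.IsLocallyC0 (F n))

/-- The lower integral of `F` against the induced measure `ν`:
`∫ F dν = ∫_{𝒢⁽⁰⁾} Σ_{x ∈ 𝒢^u} F(x) dμ(u)`. -/
def fiberL (g : EtaleGroupoid G) (μ : Measure G) (F : G → ℝ≥0∞) : ℝ≥0∞ :=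
  ∫⁻ u, ∑' x : g.rFiber u, F (x : G) ∂μ

/-- The lower integral of `F` against `ν⁻¹` (source fibres). -/
def fiberLs (g : EtaleGroupoid G) (μ : Measure G) (F : G → ℝ≥0∞) : ℝ≥0∞ :=
  ∫⁻ u, ∑' x : g.sFiber u, F (x : G) ∂μ

/-- The induced measure `ν` of a set. -/
def nu (g : EtaleGroupoid G) (μ : Measure G) (E : Set G) : ℝ≥0∞ :=
  g.fiberL μ (E.indicator 1)

/-- `μ` is a quasi-invariant probability measure on the unit space: the induced
measure `ν` and its image `ν⁻¹` under inversion are mutually absolutely continuous. -/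
def IsQuasiInvariant (g : EtaleGroupoid G) (μ : Measure G) : Prop :=
  IsProbabilityMeasure μ ∧ μ g.unitsᶜ = 0 ∧
    ∀ E : Set G, MeasurableSet E → (g.nu μ E = 0 ↔ g.nu μ (g.inv ⁻¹' E) = 0)

/-- `μ` is an invariant probability measure on the unit space: `ν = ν⁻¹`. -/
def IsInvariant (g : EtaleGroupoid G) (μ : Measure G) : Prop :=
  IsProbabilityMeasure μ ∧ μ g.unitsᶜ = 0 ∧
    ∀ E : Set G, MeasurableSet E → g.nu μ E = g.nu μ (g.inv ⁻¹' E)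

/-- A modular function (Radon–Nikodym derivative `Δ = dν/dν⁻¹`), chosen to be a
Borel homomorphism. -/
structure IsModular (g : EtaleGroupoid G) (μ : Measure G) (Δ : G → ℝ) : Prop where
  meas : Measurable Δ
  pos : ∀ x, 0 < Δ x
  hom : ∀ x y, g.s x = g.r y → Δ (g.mul x y) = Δ x * Δ y
  inv_eq : ∀ x, Δ (g.inv x) = (Δ x)⁻¹
  rn : ∀ F : G → ℝ≥0∞, Measurable F →
    g.fiberL μ F = g.fiberLs μ fun x => F x * ENNReal.ofReal (Δ x)

end EtaleGroupoid

/-- A unitary representation of the groupoid on a Borel Hilbert bundle.  The fibres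
are realized as (closed) subspaces of an ambient Hilbert space `E`; `op x` is a
unitary `H(s x) → H(r x)`, the assignment is a Borel homomorphism (Borel-ness being
expressed through the matrix coefficients of a fundamental sequence of Borel
sections of the bundle). -/
structure GRep {G : Type} [TopologicalSpace G] [MeasurableSpace G] (g : EtaleGroupoid G)
    (E : Type) [NormedAddCommGroup E] [InnerProductSpace ℂ E] [MeasurableSpace E] where
  fib : G → Submodule ℂ E
  op : G → E → E
  mapsTo : ∀ x : G, ∀ v ∈ fib (g.s x), op x v ∈ fib (g.r x)
  map_add : ∀ x : G, ∀ v ∈ fib (g.s x), ∀ w ∈ fib (g.s x), op x (v + w) = op x v + op x w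
  map_smul : ∀ x : G, ∀ c : ℂ, ∀ v ∈ fib (g.s x), op x (c • v) = c • op x v
  inner_op : ∀ x : G, ∀ v ∈ fib (g.s x), ∀ w ∈ fib (g.s x),
    (inner ℂ (op x v) (op x w) : ℂ) = (inner ℂ v w : ℂ)
  surj' : ∀ x : G, ∀ w ∈ fib (g.r x), ∃ v ∈ fib (g.s x), op x v = w
  mul_op : ∀ x y : G, g.s x = g.r y → ∀ v ∈ fib (g.s y), op (g.mul x y) v = op x (op y v)
  unit_op : ∀ u ∈ g.units, ∀ v ∈ fib u, op u v = v
  fundSeq : ℕ → G → E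
  fundSeq_mem : ∀ n : ℕ, ∀ u ∈ g.units, fundSeq n u ∈ fib u
  fundSeq_meas : ∀ n : ℕ, Measurable (fundSeq n)
  fundSeq_dense : ∀ u ∈ g.units, ∀ v ∈ fib u, ∀ ε : ℝ, 0 < ε →
    ∃ w ∈ Submodule.span ℂ (Set.range fun n => fundSeq n u), ‖v - w‖ < ε
  fund_coeff_meas : ∀ n m : ℕ,
    Measurable fun x : G => (inner ℂ (fundSeq m (g.r x)) (op x (fundSeq n (g.s x))) : ℂ)

namespace GRep

variable {G : Type} [TopologicalSpace G] [MeasurableSpace G] {g : EtaleGroupoid G}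
variable {E : Type} [NormedAddCommGroup E] [InnerProductSpace ℂ E] [MeasurableSpace E]

/-- The matrix coefficient `x ↦ ⟨π(x) ξ(s x), η(r x)⟩` (linear in `ξ`). -/
def coeff (π : GRep g E) (ξ η : G → E) : G → ℂ :=
  fun x => (inner ℂ (η (g.r x)) (π.op x (ξ (g.s x))) : ℂ)

/-- A fundamental sequence of Borel sections of the bundle of `π`. -/
structure IsFundSeq (π : GRep g E) (f : ℕ → G → E) : Prop where
  mem : ∀ n : ℕ, ∀ u ∈ g.units, f n u ∈ π.fib u
  meas : ∀ n : ℕ, Measurable (f n)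
  dense : ∀ u ∈ g.units, ∀ v ∈ π.fib u, ∀ ε : ℝ, 0 < ε →
    ∃ w ∈ Submodule.span ℂ (Set.range fun n => f n u), ‖v - w‖ < ε
  coeff_meas : ∀ n m : ℕ, Measurable (π.coeff (f n) (f m))

/-- `π` is a `D`-representation: some fundamental sequence has all its matrix
coefficients in `D`. -/
def IsDRep (π : GRep g E) (D : Set (G → ℂ)) : Prop :=
  ∃ f : ℕ → G → E, π.IsFundSeq f ∧ ∀ n m : ℕ, π.coeff (f n) (f m) ∈ D

/-- A square-integrable Borel section of the bundle of `π`, i.e. a vector of the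
direct integral `∫^⊕ H_π(u) dμ(u)`. -/
structure IsL2Section (π : GRep g E) (μ : MeasureTheory.Measure G) (ξ : G → E) : Prop where
  mem : ∀ u ∈ g.units, ξ u ∈ π.fib u
  meas : Measurable ξ
  sq : MeasureTheory.Integrable (fun u => ‖ξ u‖ ^ 2) μ

/-- `⟨π_μ(f) ξ, η⟩ = ∫_𝒢 f(x) ⟨π(x)ξ(s x), η(r x)⟩ Δ(x)^{-1/2} dν(x)`, the
sesquilinear pairing of the integrated form of `π` w.r.t. `μ` (with modular
function `Δ`). -/
def pairing (π : GRep g E) (μ : MeasureTheory.Measure G) (Δ : G → ℝ) (f : G → ℂ)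
    (ξ η : G → E) : ℂ :=
  ∫ u, (∑' x : g.rFiber u,
    f (x : G) * ((Δ (x : G) ^ (-(1 / 2) : ℝ) : ℝ) : ℂ) * π.coeff ξ η (x : G)) ∂μ

/-- The operator norm `‖π_μ(f)‖` of the integrated form, expressed as the supremum
of the pairings over the unit ball of (the dense subspace of square-integrable
Borel sections of) the direct integral. -/
def intNorm (π : GRep g E) (μ : MeasureTheory.Measure G) (Δ : G → ℝ) (f : G → ℂ) : ℝ :=
  sSup {t : ℝ | ∃ ξ η : G → E, π.IsL2Section μ ξ ∧ π.IsL2Section μ η ∧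
    (∫ u, ‖ξ u‖ ^ 2 ∂μ) ≤ 1 ∧ (∫ u, ‖η u‖ ^ 2 ∂μ) ≤ 1 ∧
    t = ‖π.pairing μ Δ f ξ η‖}

end GRep

namespace EtaleGroupoid

variable {G : Type} [TopologicalSpace G] [MeasurableSpace G]

/-- The set of quasi-invariant probability measures on the unit space. -/
def QIMeasures (g : EtaleGroupoid G) : Set (MeasureTheory.Measure G) :=
  {μ | g.IsQuasiInvariant μ}

/-- The seminorm `‖f‖_{D,ℳ} = sup {‖π_μ(f)‖ : π a D-representation, μ ∈ ℳ}`. -/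
def DNorm (g : EtaleGroupoid G) (D : Set (G → ℂ)) (M : Set (MeasureTheory.Measure G))
    (f : G → ℂ) : ℝ :=
  sSup {t : ℝ | ∃ π : GRep g Hamb, π.IsDRep D ∧ ∃ μ ∈ M, ∃ Δ : G → ℝ,
    g.IsModular μ Δ ∧ t = π.intNorm μ Δ f}

/-- The full norm `‖f‖_max = sup {‖π_μ(f)‖ : π any representation, μ quasi-invariant}`. -/
def maxNorm (g : EtaleGroupoid G) (f : G → ℂ) : ℝ :=
  sSup {t : ℝ | ∃ π : GRep g Hamb, ∃ μ ∈ g.QIMeasures, ∃ Δ : G → ℝ,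
    g.IsModular μ Δ ∧ t = π.intNorm μ Δ f}

/-- `‖Ind(δ_u)(f)‖`: the norm of left convolution by `f` on `ℓ²(𝒢_u)`, expressed as a
supremum of pairings against finitely supported vectors in the unit ball. -/
def IndDeltaNorm (g : EtaleGroupoid G) (u : G) (f : G → ℂ) : ℝ :=
  sSup {t : ℝ | ∃ ξ η : G → ℂ,
    (Function.support ξ).Finite ∧ Function.support ξ ⊆ g.sFiber u ∧
    (Function.support η).Finite ∧ Function.support η ⊆ g.sFiber u ∧
    (∑' x : g.sFiber u, ‖ξ (x : G)‖ ^ 2) ≤ 1 ∧ (∑' x : g.sFiber u, ‖η (x : G)‖ ^ 2) ≤ 1 ∧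
    t = ‖∑' x : g.sFiber u, g.conv f ξ (x : G) * conj (η (x : G))‖}

/-- The reduced norm `‖f‖_r = sup_{u ∈ 𝒢⁽⁰⁾} ‖Ind(δ_u)(f)‖`. -/
def redNorm (g : EtaleGroupoid G) (f : G → ℂ) : ℝ :=
  sSup {t : ℝ | ∃ u ∈ g.units, t = g.IndDeltaNorm u f}

/-- `‖Ind(μ)(f)‖`: the norm of left convolution by `f` on `L²(𝒢, ν⁻¹)`, expressed as a
supremum of pairings against bounded compactly supported Borel functions in the unit
ball of `L²(𝒢, ν⁻¹)`. -/
def IndMuNorm (g : EtaleGroupoid G) (μ : MeasureTheory.Measure G) (f : G → ℂ) : ℝ :=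
  sSup {t : ℝ | ∃ ξ η : G → ℂ, Measurable ξ ∧ Measurable η ∧ BddFun ξ ∧ BddFun η ∧
    HasCompactSupport ξ ∧ HasCompactSupport η ∧
    (∫ u, (∑' x : g.sFiber u, ‖ξ (x : G)‖ ^ 2) ∂μ) ≤ 1 ∧
    (∫ u, (∑' x : g.sFiber u, ‖η (x : G)‖ ^ 2) ∂μ) ≤ 1 ∧
    t = ‖∫ u, (∑' x : g.sFiber u, g.conv f ξ (x : G) * conj (η (x : G))) ∂μ‖}

/-- The norm of `L²(𝒢, ν⁻¹)`. -/
def L2s (g : EtaleGroupoid G) (μ : MeasureTheory.Measure G) (h : G → ℂ) : ℝ :=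
  Real.sqrt (∫ u, (∑' x : g.sFiber u, ‖h (x : G)‖ ^ 2) ∂μ)

/-- Products of `n` elements of `S` (units for `n = 0`). -/
def Spow (g : EtaleGroupoid G) (S : Set G) : ℕ → Set G
  | 0 => g.units
  | n + 1 => {z | ∃ x ∈ S, ∃ y ∈ Spow g S n, g.s x = g.r y ∧ z = g.mul x y}

/-- The ball `∪_{k ≤ n} S^k`. -/
def ball (g : EtaleGroupoid G) (S : Set G) (n : ℕ) : Set G :=
  ⋃ k ∈ Finset.range (n + 1), g.Spow S k

/-- The length function `l_S(x) = min {n ≥ 0 : x ∈ ∪_{k ≤ n} S^k}`. -/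
def lS (g : EtaleGroupoid G) (S : Set G) (x : G) : ℕ := sInf {n : ℕ | x ∈ g.ball S n}

/-- The fibre Cayley-graph metric `d(x, y) = l_S (x⁻¹ y)` (as a real number). -/
def dS (g : EtaleGroupoid G) (S : Set G) (x y : G) : ℝ := (g.lS S (g.mul (g.inv x) y) : ℝ)

/-- `S` is a compact open symmetric generating set making all fibre Cayley graphs
`δ`-hyperbolic; i.e. `𝒢` is a hyperbolic groupoid (witnessed by `S` and `δ`). -/
structure IsHyperbolicGen (g : EtaleGroupoid G) (S : Set G) (δ : ℝ) : Prop where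
  compact : IsCompact S
  isOpen : IsOpen S
  symm : ∀ x ∈ S, g.inv x ∈ S
  gen : ∀ x : G, ∃ n : ℕ, 1 ≤ n ∧ x ∈ g.Spow S n
  delta_pos : 0 < δ
  hyp : ∀ u ∈ g.units, ∀ a ∈ g.rFiber u, ∀ b ∈ g.rFiber u, ∀ c ∈ g.rFiber u,
    ∀ d ∈ g.rFiber u,
      g.dS S a b + g.dS S c d ≤ max (g.dS S a c + g.dS S b d) (g.dS S a d + g.dS S b c) + δ

/-- The ideal `ℒ^p_μ(𝒢)` of bounded Borel functions which are `p`-integrable for the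
induced measure `ν`. -/
def LpIdeal (g : EtaleGroupoid G) (μ : MeasureTheory.Measure G) (p : ℝ) : Set (G → ℂ) :=
  {f | Measurable f ∧ BddFun f ∧
    g.fiberL μ (fun x => ENNReal.ofReal (‖f x‖ ^ p)) ≠ ⊤}

/-- The `ℒ^p_μ`-seminorm `|f|_p`. -/
def lpSeminorm (g : EtaleGroupoid G) (μ : MeasureTheory.Measure G) (p : ℝ) (f : G → ℂ) : ℝ :=
  ((g.fiberL μ fun x => ENNReal.ofReal (‖f x‖ ^ p)).toReal) ^ (1 / p)

/-- `‖f‖_{ℒ^p_μ(𝒢), μ}`: the supremum of `‖π_μ(f)‖` over all `ℒ^p_μ(𝒢)`-representations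
(for an invariant `μ`, so `Δ ≡ 1`). -/
def LpDNorm (g : EtaleGroupoid G) (μ : MeasureTheory.Measure G) (p : ℝ) (f : G → ℂ) : ℝ :=
  sSup {t : ℝ | ∃ π : GRep g Hamb, π.IsDRep (g.LpIdeal μ p) ∧
    t = π.intNorm μ (fun _ => 1) f}

end EtaleGroupoid

/-! Every unitary representation is a `B(𝒢)`-representation, so the two suprema defining
`‖·‖_{B(𝒢)}` and `‖·‖_max` range over the same representations. Given a fundamental
sequence `{ξ_n}`, cut each `ξ_n` down to the Borel sets `{‖ξ_n‖ ≤ k}`: the truncations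
`ξ_{n,k}` still form a fundamental sequence, and by Cauchy–Schwarz and unitarity of `π(x)`
the coefficient of `(ξ_{n,k}, ξ_{m,j})` is bounded by `j k`. -/

namespace EtaleGroupoid

variable {G : Type} [TopologicalSpace G] (g : EtaleGroupoid G)

lemma s_eq_r_inv (x : G) : g.s x = g.r (g.inv x) := by
  rw [g.r_def, g.inv_inv, g.s_def]

lemma r_mem_units (x : G) : g.r x ∈ g.units := ⟨x, rfl⟩

lemma s_mem_units (x : G) : g.s x ∈ g.units := ⟨g.inv x, (g.s_eq_r_inv x).symm⟩

lemma r_eq_of_mem_units {u : G} (hu : u ∈ g.units) : g.r u = u := by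
  obtain ⟨x, rfl⟩ := hu
  rw [g.r_def x, g.r_mul x (g.inv x) (g.s_eq_r_inv x)]
  exact g.r_def x

lemma s_eq_of_mem_units {u : G} (hu : u ∈ g.units) : g.s u = u := by
  obtain ⟨x, rfl⟩ := hu
  rw [g.r_def x, g.s_mul x (g.inv x) (g.s_eq_r_inv x), g.s_inv]
  exact g.r_def x

lemma dNorm_QIMeasures_eq_maxNorm [MeasurableSpace G] {D : Set (G → ℂ)}
    (hD : ∀ π : GRep g Hamb, π.IsDRep D) (f : G → ℂ) :
    g.DNorm D g.QIMeasures f = g.maxNorm f := by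
  unfold DNorm maxNorm
  congr 1
  ext t
  constructor
  · rintro ⟨π, -, hμ⟩
    exact ⟨π, hμ⟩
  · rintro ⟨π, hμ⟩
    exact ⟨π, hD π, hμ⟩

end EtaleGroupoid

namespace GRep

variable {G : Type} [TopologicalSpace G] [MeasurableSpace G] {g : EtaleGroupoid G}
  {E : Type} [NormedAddCommGroup E] [InnerProductSpace ℂ E] [MeasurableSpace E]
  (π : GRep g E)

lemma op_zero (x : G) : π.op x 0 = 0 := by
  simpa using π.map_smul x 0 0 (Submodule.zero_mem _)

lemma norm_op {x : G} {v : E} (hv : v ∈ π.fib (g.s x)) : ‖π.op x v‖ = ‖v‖ := by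
  have h := π.inner_op x v hv v hv
  rw [inner_self_eq_norm_sq_to_K, inner_self_eq_norm_sq_to_K] at h
  have h2 : ‖π.op x v‖ ^ 2 = ‖v‖ ^ 2 := by exact_mod_cast h
  exact (sq_eq_sq₀ (norm_nonneg _) (norm_nonneg _)).1 h2

lemma norm_coeff_le {ξ : G → E} {x : G} (hξ : ξ (g.s x) ∈ π.fib (g.s x)) (η : G → E) :
    ‖π.coeff ξ η x‖ ≤ ‖η (g.r x)‖ * ‖ξ (g.s x)‖ :=
  (norm_inner_le_norm (𝕜 := ℂ) _ _).trans_eq (by rw [π.norm_op hξ])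

lemma coeff_self_of_mem_units {ξ : G → E} {u : G} (hu : u ∈ g.units)
    (hξ : ξ u ∈ π.fib u) : π.coeff ξ ξ u = ((‖ξ u‖ ^ 2 : ℝ) : ℂ) := by
  simp only [coeff, g.r_eq_of_mem_units hu, g.s_eq_of_mem_units hu, π.unit_op u hu _ hξ,
    inner_self_eq_norm_sq_to_K, Complex.ofReal_pow]
  rfl

lemma coeff_indicator (ξ η : G → E) (A B : Set G) :
    π.coeff (A.indicator ξ) (B.indicator η) =
      (g.s ⁻¹' A ∩ g.r ⁻¹' B).indicator (π.coeff ξ η) := by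
  funext x
  by_cases hA : g.s x ∈ A <;> by_cases hB : g.r x ∈ B <;>
    simp [coeff, hA, hB, π.op_zero]

lemma isFundSeq_fundSeq : π.IsFundSeq π.fundSeq :=
  ⟨π.fundSeq_mem, π.fundSeq_meas, π.fundSeq_dense, π.fund_coeff_meas⟩

lemma IsFundSeq.coeff_mem_BG {π : GRep g E} {f : ℕ → G → E} (hf : π.IsFundSeq f)
    {C : ℕ → ℝ} (hC : ∀ n, ∀ u ∈ g.units, ‖f n u‖ ≤ C n) (n m : ℕ) :
    π.coeff (f n) (f m) ∈ g.BG := by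
  refine ⟨hf.coeff_meas n m, C m * C n, fun x => ?_⟩
  have hm := hC m _ (g.r_mem_units x)
  exact (π.norm_coeff_le (hf.mem n _ (g.s_mem_units x)) _).trans
    (mul_le_mul hm (hC n _ (g.s_mem_units x)) (norm_nonneg _) ((norm_nonneg _).trans hm))

/-- The norm of a section need not be Borel for the arbitrary σ-algebra on `E`; on units it
is read off instead from the Borel diagonal coefficient `⟨π(u) ξ(u), ξ(u)⟩ = ‖ξ(u)‖²`. -/
def normLeSet (ξ : G → E) (k : ℕ) : Set G := {u | ‖π.coeff ξ ξ u‖ ≤ (k : ℝ) ^ 2}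

lemma mem_normLeSet_iff {ξ : G → E} {u : G} (hu : u ∈ g.units) (hξ : ξ u ∈ π.fib u)
    (k : ℕ) : u ∈ π.normLeSet ξ k ↔ ‖ξ u‖ ≤ k := by
  rw [normLeSet, Set.mem_ofPred_eq, π.coeff_self_of_mem_units hu hξ, Complex.norm_real,
    Real.norm_of_nonneg (by positivity)]
  exact pow_le_pow_iff_left₀ (norm_nonneg _) k.cast_nonneg two_ne_zero

/-- `ξ_{n,k}` sits at index `Nat.pair n k`. -/
def truncation (f : ℕ → G → E) (i : ℕ) : G → E :=
  (π.normLeSet (f i.unpair.1) i.unpair.2).indicator (f i.unpair.1)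

variable {π}

lemma IsFundSeq.norm_truncation_le {f : ℕ → G → E} (hf : π.IsFundSeq f) (i : ℕ) :
    ∀ u ∈ g.units, ‖π.truncation f i u‖ ≤ i.unpair.2 := by
  intro u hu
  by_cases h : u ∈ π.normLeSet (f i.unpair.1) i.unpair.2
  · rw [truncation, Set.indicator_of_mem h]
    exact (π.mem_normLeSet_iff hu (hf.mem _ u hu) _).1 h
  · rw [truncation, Set.indicator_of_notMem h, norm_zero]
    exact Nat.cast_nonneg _

lemma IsFundSeq.truncation [BorelSpace G] {f : ℕ → G → E} (hf : π.IsFundSeq f) :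
    π.IsFundSeq (π.truncation f) := by
  have hset : ∀ n k, MeasurableSet (π.normLeSet (f n) k) := fun n k =>
    measurableSet_le (hf.coeff_meas n n).norm measurable_const
  refine ⟨fun i u hu => ?_, fun i => (hf.meas _).indicator (hset _ _), ?_, fun i j => ?_⟩
  · by_cases h : u ∈ π.normLeSet (f i.unpair.1) i.unpair.2
    · rw [GRep.truncation, Set.indicator_of_mem h]
      exact hf.mem _ u hu
    · rw [GRep.truncation, Set.indicator_of_notMem h]
      exact Submodule.zero_mem _
  · intro u hu v hv ε hε
    obtain ⟨w, hw, hvw⟩ := hf.dense u hu v hv ε hε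
    refine ⟨w, Submodule.span_le.2 ?_ hw, hvw⟩
    rintro _ ⟨n, rfl⟩
    have hmem : u ∈ π.normLeSet (f n) ⌈‖f n u‖⌉₊ :=
      (π.mem_normLeSet_iff hu (hf.mem n u hu) _).2 (Nat.le_ceil _)
    refine Submodule.subset_span ⟨Nat.pair n ⌈‖f n u‖⌉₊, ?_⟩
    simp only [GRep.truncation, Nat.unpair_pair]
    exact Set.indicator_of_mem hmem _
  · rw [GRep.truncation, GRep.truncation, π.coeff_indicator]
    exact (hf.coeff_meas _ _).indicator
      ((g.continuous_s.measurable (hset _ _)).inter (g.continuous_r.measurable (hset _ _)))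

lemma isDRep_BG [BorelSpace G] (π : GRep g E) : π.IsDRep g.BG := by
  have hf := π.isFundSeq_fundSeq
  exact ⟨_, hf.truncation, hf.truncation.coeff_mem_BG hf.norm_truncation_le⟩

end GRep

section Statements

variable {G : Type} [TopologicalSpace G] [T2Space G] [SecondCountableTopology G]
  [LocallyCompactSpace G] [MeasurableSpace G] [BorelSpace G]

/-- For any second countable locally compact Hausdorff étale groupoid `𝒢`,
`C*_{B(𝒢)}(𝒢) = C*(𝒢)`.  In particular every unitary representation `π` of `𝒢` is a
`B(𝒢)`-representation: for any orthonormal fundamental sequence `{f_n}` of the Borel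
Hilbert bundle of `π`, each matrix coefficient `x ↦ ⟨π(x) f_n(s x), f_m(r x)⟩` is a
bounded Borel function. -/
theorem full_cstar_is_BG_completion (g : EtaleGroupoid G) :
    (∀ f : G → ℂ, g.IsCc f → g.DNorm g.BG g.QIMeasures f = g.maxNorm f) ∧
    (∀ (E : Type) [NormedAddCommGroup E] [InnerProductSpace ℂ E] [MeasurableSpace E]
        (π : GRep g E) (fs : ℕ → G → E), π.IsFundSeq fs →
        (∀ u ∈ g.units, ∀ n : ℕ, fs n u = 0 ∨ ‖fs n u‖ = 1) →
        (∀ u ∈ g.units, ∀ n m : ℕ, n ≠ m → (inner ℂ (fs n u) (fs m u) : ℂ) = 0) →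
        ∀ n m : ℕ, π.coeff (fs n) (fs m) ∈ g.BG) ∧
    (∀ (E : Type) [NormedAddCommGroup E] [InnerProductSpace ℂ E] [MeasurableSpace E]
        (π : GRep g E), π.IsDRep g.BG) := by
  refine ⟨fun f _ => g.dNorm_QIMeasures_eq_maxNorm GRep.isDRep_BG f, ?_,
    fun E _ _ _ π => π.isDRep_BG⟩
  intro E _ _ _ π fs hfs hnorm _ n m
  refine hfs.coeff_mem_BG (C := fun _ => 1) (fun n u hu => ?_) n m
  rcases hnorm u hu n with h | h <;> simp [h]

end Statements
end
end

section
/- Let 𝒢 be a second countable locally compact Hausdorff étale groupoid. The left regular representation λ of 𝒢 is a B_c(𝒢)-representation. In fact, for the fundamental sequence given by restrictions of a sup-norm dense sequence in C_c(𝒢), the matrix coefficient x ↦ ⟨λ(x)f(s(x)), g(r(x))⟩_{ℓ²(𝒢^{r(x)})} equals (conj(g) * conj(f*))(x) and lies in C_c(𝒢) ⊆ B_c(𝒢), for any f,g ∈ C_c(𝒢). -/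
open scoped BigOperators ComplexConjugate ENNReal NNReal
open MeasureTheory Filter Topology

noncomputable section

/-!
Writing `x⁻¹y = (y⁻¹x)⁻¹` turns the matrix coefficient `x ↦ Σ_{y ∈ 𝒢^{r x}} f(x⁻¹y) conj(h(y))`
into the convolution `conj h * conj f^*`, and it vanishes outside the compact product set
`supp h · (supp f)⁻¹`. For continuity at `x₀`, the finitely many points of `supp h ∩ 𝒢^{r x₀}`
extend to continuous local sections of the local homeomorphism `r`; for `u` near `r x₀` their
values at `u` are distinct and exhaust `supp h ∩ 𝒢^u`, so near `x₀` the fibre sum is a finite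
sum of continuous functions.
-/

theorem tsum_subtype_eq_sum_of_injOn {α β M : Type*} [AddCommMonoid M] [TopologicalSpace M]
    {s : Set α} {S : Finset β} {τ : β → α} (hτ : ∀ b ∈ S, τ b ∈ s) (hinj : Set.InjOn τ S)
    {φ : α → M} (hφ : ∀ a ∈ s, φ a ≠ 0 → ∃ b ∈ S, τ b = a) :
    ∑' a : s, φ a = ∑ b ∈ S, φ (τ b) := by
  classical
  rw [tsum_subtype s φ, tsum_eq_sum (s := S.image τ), Finset.sum_image hinj]
  · exact Finset.sum_congr rfl fun b hb => Set.indicator_of_mem (hτ b hb) φ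
  · intro a ha
    by_contra hne
    obtain ⟨b, hb, rfl⟩ := hφ a (Set.mem_of_indicator_ne_zero hne)
      fun h0 => hne (Set.indicator_apply_eq_zero.mpr fun _ => h0)
    exact ha (Finset.mem_image_of_mem τ hb)

namespace IsLocalHomeomorph

variable {X Y : Type*} [TopologicalSpace X] [TopologicalSpace Y] {π : X → Y}

theorem finite_inter_fiber [T1Space Y] (hπ : IsLocalHomeomorph π) {K : Set X}
    (hK : IsCompact K) (y : Y) : (K ∩ {x | π x = y}).Finite :=
  (hK.inter_right (isClosed_singleton.preimage hπ.continuous)).finite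
    (hπ.isLocalHomeomorphOn.isDiscrete_of_image
      (Set.subsingleton_singleton.anti (by rintro _ ⟨x, hx, rfl⟩; exact hx.2)).isDiscrete)

theorem exists_local_sections [T2Space X] [T2Space Y] (hπ : IsLocalHomeomorph π) {K : Set X}
    (hK : IsCompact K) (y₀ : Y) :
    ∃ (S : Finset X) (σ : X → Y → X), (∀ x ∈ S, ContinuousAt (σ x) y₀) ∧
      ∀ᶠ y in 𝓝 y₀, (∀ x ∈ S, π (σ x y) = y) ∧ Set.InjOn (fun x => σ x y) S ∧
        ∀ z ∈ K, π z = y → ∃ x ∈ S, σ x y = z := by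
  classical
  set S := (hπ.finite_inter_fiber hK y₀).toFinset
  have hS : ∀ x ∈ S, π x = y₀ := fun x hx => ((hπ.finite_inter_fiber hK y₀).mem_toFinset.mp hx).2
  set e := hπ.localInverseAt
  have hself : ∀ x ∈ S, e x y₀ = x := fun x hx => hS x hx ▸ hπ.localInverseAt_apply_self
  have hcont : ∀ x ∈ S, ContinuousAt (e x) y₀ := fun x hx =>
    (e x).continuousAt (hS x hx ▸ hπ.apply_self_mem_localInverseAt_source)
  have hsource : ∀ᶠ y in 𝓝 y₀, ∀ x ∈ S, y ∈ (e x).source :=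
    (Filter.eventually_all_finset S).mpr fun x hx =>
      (e x).open_source.mem_nhds (hS x hx ▸ hπ.apply_self_mem_localInverseAt_source)
  have hne : ∀ᶠ y in 𝓝 y₀, ∀ x ∈ S, ∀ x' ∈ S, x ≠ x' → e x y ≠ e x' y := by
    refine (Filter.eventually_all_finset S).mpr fun x hx =>
      (Filter.eventually_all_finset S).mpr fun x' hx' => ?_
    refine Filter.eventually_imp_distrib_left.mpr fun hxx' => ?_
    exact ((hcont x hx).ne_iff_eventually_ne (hcont x' hx')).mp (by rwa [hself x hx, hself x' hx'])
  -- Points of `K` outside the chosen local inverses lie over a compact set missing `y₀`.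
  have hout : ∀ᶠ y in 𝓝 y₀, y ∉ π '' (K \ ⋃ x ∈ S, (e x).target) := by
    refine ((hK.diff (isOpen_biUnion fun x _ => (e x).open_target)).image
      hπ.continuous).isClosed.isOpen_compl.mem_nhds ?_
    rintro ⟨z, ⟨hzK, hz⟩, hzy⟩
    have hzS : z ∈ S := (hπ.finite_inter_fiber hK y₀).mem_toFinset.mpr ⟨hzK, hzy⟩
    exact hz (Set.mem_biUnion hzS hπ.self_mem_localInverseAt_target)
  refine ⟨S, fun x => e x, hcont, ?_⟩
  filter_upwards [hsource, hne, hout] with y hsource hne hout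
  refine ⟨fun x hx => hπ.apply_localInverseAt_of_mem (hsource x hx),
    fun x hx x' hx' heq => by_contra fun h => hne x hx x' hx' h heq, fun z hzK hzy => ?_⟩
  obtain ⟨x, hx, hzx⟩ := Set.mem_iUnion₂.mp
    (by_contra fun h => hout ⟨z, ⟨hzK, h⟩, hzy⟩ : z ∈ ⋃ x ∈ S, (e x).target)
  refine ⟨x, hx, ?_⟩
  rw [← hzy, ← congrFun (hπ.localInverseAt_symm x) z]
  exact (e x).right_inv hzx

theorem continuous_tsum_fiber [T2Space X] [T2Space Y] {T M : Type*} [TopologicalSpace T]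
    [AddCommMonoid M] [TopologicalSpace M] [ContinuousAdd M] (hπ : IsLocalHomeomorph π)
    {p : T → Y} (hp : Continuous p) {F : T → X → M}
    (hF : ContinuousOn (Function.uncurry F) {q | π q.2 = p q.1}) {K : Set X}
    (hK : IsCompact K) (hFK : ∀ t, ∀ x ∉ K, F t x = 0) :
    Continuous fun t => ∑' x : {x | π x = p t}, F t x := by
  refine continuous_iff_continuousAt.mpr fun t₀ => ?_
  obtain ⟨S, σ, hσ, hev⟩ := hπ.exists_local_sections hK (p t₀)
  have hloc : ∀ᶠ t in 𝓝 t₀, (∀ x ∈ S, π (σ x (p t)) = p t) ∧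
      ∑' x : {x | π x = p t}, F t x = ∑ x ∈ S, F t (σ x (p t)) := by
    filter_upwards [hp.continuousAt.eventually hev] with t ⟨hσπ, hinj, hcover⟩
    refine ⟨hσπ, tsum_subtype_eq_sum_of_injOn hσπ hinj fun z hz hFz => hcover z ?_ hz⟩
    exact by_contra fun hzK => hFz (hFK t z hzK)
  refine ContinuousAt.congr ?_ (hloc.mono fun t h => h.2.symm)
  refine tendsto_finsetSum S fun x hx => ?_
  have hpair : ContinuousAt (fun t => (t, σ x (p t))) t₀ :=
    continuousAt_id.prodMk ((hσ x hx).comp hp.continuousAt)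
  have hterm := (hF _ (hloc.self_of_nhds.1 x hx)).comp_of_preimage_mem_nhdsWithin
    hpair.continuousWithinAt (by rw [nhdsWithin_univ]; exact hloc.mono fun t h => h.1 x hx)
  exact continuousWithinAt_univ _ _ |>.mp hterm

end IsLocalHomeomorph

namespace EtaleGroupoid

variable {G : Type} [TopologicalSpace G] (g : EtaleGroupoid G)

theorem r_inv (x : G) : g.r (g.inv x) = g.s x := by
  simpa only [g.inv_inv] using (g.s_inv (g.inv x)).symm

theorem mul_inv_cancel_left {x y : G} (h : g.r x = g.r y) :
    g.mul x (g.mul (g.inv x) y) = y := by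
  simpa only [g.inv_inv] using g.inv_mul_cancel' (g.inv x) y (by rw [g.s_inv, h])

theorem inv_inv_mul {x y : G} (h : g.r y = g.r x) :
    g.inv (g.mul (g.inv y) x) = g.mul (g.inv x) y := by
  set z := g.mul (g.inv y) x
  have hyz : g.s y = g.r z := by rw [g.r_mul _ _ (by rw [g.s_inv, h]), g.r_inv]
  have hxz : g.mul x (g.inv z) = y := by
    rw [← g.mul_inv_cancel_left h]
    exact g.mul_inv_cancel' y z hyz
  have hsz : g.s x = g.r (g.inv z) := by rw [g.r_inv, g.s_mul _ _ (by rw [g.s_inv, h])]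
  rw [← hxz, g.inv_mul_cancel' x _ hsz]

theorem isLocalHomeomorph_r : IsLocalHomeomorph g.r := by
  refine isLocalHomeomorph_iff_isOpenEmbedding_restrict.mpr fun x => ?_
  obtain ⟨U, hUo, hxU, hinj, himg⟩ := g.etale x
  refine ⟨U, hUo.mem_nhds hxU, .of_continuous_injective_isOpenMap
    (g.continuous_r.comp continuous_subtype_val) (Set.injOn_iff_injective.mp hinj) ?_⟩
  intro O hO
  rw [Set.domRestrict_eq, Set.image_comp]
  exact himg _ (Subtype.coe_image_subset U O) (hUo.isOpenMap_subtype_val O hO)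

theorem continuousOn_mul :
    ContinuousOn (fun p : G × G => g.mul p.1 p.2) {p | g.s p.1 = g.r p.2} := by
  intro p hp W hW
  obtain ⟨W', hW'W, hW'o, hpW'⟩ := mem_nhds_iff.mp hW
  obtain ⟨U, V, hUo, hVo, hpU, hpV, hUV⟩ := g.continuous_mul p.1 p.2 hp W' hW'o hpW'
  rw [Filter.mem_map, mem_nhdsWithin]
  exact ⟨U ×ˢ V, hUo.prod hVo, ⟨hpU, hpV⟩,
    fun q ⟨⟨hqU, hqV⟩, hq⟩ => hW'W (hUV q.1 hqU q.2 hqV hq)⟩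

/-- The matrix coefficient `x ↦ ⟨λ(x) f(s x), h(r x)⟩_{ℓ²(𝒢^{r x})}` of the left regular
representation. -/
def leftRegCoeff (f h : G → ℂ) : G → ℂ :=
  fun x => ∑' y : g.rFiber (g.r x), f (g.mul (g.inv x) y) * conj (h y)

theorem leftRegCoeff_eq_conv (f h : G → ℂ) :
    g.leftRegCoeff f h = g.conv (fun y => conj (h y)) (fun z => conj (g.star' f z)) := by
  funext x
  refine tsum_congr fun y => ?_
  simp only [star', g.inv_inv_mul y.2, Complex.conj_conj]
  exact mul_comm _ _

theorem continuous_leftRegCoeff [T2Space G] {f h : G → ℂ} (hf : Continuous f)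
    (hh : Continuous h) (hhc : HasCompactSupport h) : Continuous (g.leftRegCoeff f h) := by
  have hmul : ContinuousOn (fun q : G × G => g.mul (g.inv q.1) q.2) {q | g.r q.2 = g.r q.1} :=
    g.continuousOn_mul.comp ((g.continuous_inv.comp continuous_fst).prodMk
      continuous_snd).continuousOn fun q hq => (g.s_inv q.1).trans hq.symm
  refine g.isLocalHomeomorph_r.continuous_tsum_fiber g.continuous_r
    (F := fun x y => f (g.mul (g.inv x) y) * conj (h y))
    ((hf.comp_continuousOn hmul).mul
      (Complex.continuous_conj.comp (hh.comp continuous_snd)).continuousOn)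
    hhc (fun x y hy => ?_)
  rw [image_eq_zero_of_notMem_tsupport hy, map_zero, mul_zero]

theorem hasCompactSupport_leftRegCoeff [T2Space G] {f h : G → ℂ} (hf : HasCompactSupport f)
    (hh : HasCompactSupport h) : HasCompactSupport (g.leftRegCoeff f h) := by
  set C : Set (G × G) := (tsupport h ×ˢ (g.inv '' tsupport f)) ∩ {p | g.s p.1 = g.r p.2}
  have hC : IsCompact C := (hh.prod (hf.image g.continuous_inv)).inter_right
    (isClosed_eq (g.continuous_s.comp continuous_fst) (g.continuous_r.comp continuous_snd))
  refine HasCompactSupport.intro (hC.image_of_continuousOn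
    (g.continuousOn_mul.mono Set.inter_subset_right)) fun x hx => ?_
  by_contra hne
  obtain ⟨y, hy⟩ : ∃ y : g.rFiber (g.r x), f (g.mul (g.inv x) y) * conj (h y) ≠ 0 := by
    by_contra! h0
    exact hne ((tsum_congr h0).trans tsum_zero)
  have hry : g.r y = g.r x := y.2
  have hhy : (y : G) ∈ tsupport h :=
    subset_tsupport _ fun h0 => hy (by rw [h0, map_zero, mul_zero])
  have hfy : g.mul (g.inv x) y ∈ tsupport f := subset_tsupport _ (left_ne_zero_of_mul hy)
  have hcomp : g.s y = g.r (g.mul (g.inv y) x) := by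
    rw [g.r_mul _ _ (by rw [g.s_inv, hry]), g.r_inv]
  exact hx ⟨(y, g.mul (g.inv y) x), ⟨⟨hhy, _, hfy, g.inv_inv_mul hry.symm⟩, hcomp⟩,
    g.mul_inv_cancel_left hry⟩

theorem IsCc.mem_Bc [MeasurableSpace G] [OpensMeasurableSpace G] {f : G → ℂ} (hf : g.IsCc f) :
    f ∈ g.Bc :=
  ⟨hf.1.measurable, hf.1.bounded_above_of_compact_support hf.2, hf.2⟩

theorem isCc_leftRegCoeff [T2Space G] {f h : G → ℂ} (hf : g.IsCc f) (hh : g.IsCc h) :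
    g.IsCc (g.leftRegCoeff f h) :=
  ⟨g.continuous_leftRegCoeff hf.1 hh.1 hh.2, g.hasCompactSupport_leftRegCoeff hf.2 hh.2⟩

end EtaleGroupoid

section Statements

variable {G : Type} [TopologicalSpace G] [T2Space G] [SecondCountableTopology G]
  [LocallyCompactSpace G] [MeasurableSpace G] [BorelSpace G]

/-- `π` is (a realization of) the left regular representation of `𝒢` (fibres
`ℓ²(𝒢^u)`, `λ(x)ξ(y) = ξ(x⁻¹y)`): it carries the fundamental sequence given by the
restrictions `σ(f_n)` of a sup-norm dense sequence `{f_n} ⊆ C_c(𝒢)`, with matrix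
coefficients `⟨λ(x) σ(f_n)(s x), σ(f_m)(r x)⟩_{ℓ²(𝒢^{r x})}
  = Σ_{y ∈ 𝒢^{r x}} f_n(x⁻¹y) conj(f_m(y))`. -/
def IsLeftRegularRep (g : EtaleGroupoid G) {E : Type} [NormedAddCommGroup E]
    [InnerProductSpace ℂ E] [MeasurableSpace E] (π : GRep g E) : Prop :=
  ∃ fs : ℕ → G → ℂ, (∀ n, g.IsCc (fs n)) ∧
    (∀ h : G → ℂ, g.IsCc h → ∀ ε : ℝ, 0 < ε → ∃ n, ∀ x : G, ‖h x - fs n x‖ < ε) ∧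
    ∃ σ : ℕ → G → E, π.IsFundSeq σ ∧
      ∀ n m : ℕ, π.coeff (σ n) (σ m) = fun x : G =>
        ∑' y : g.rFiber (g.r x), fs n (g.mul (g.inv x) (y : G)) * conj (fs m (y : G))

/-- The left regular representation of `𝒢` is a
`B_c(𝒢)`-representation.  In fact, for `f, h ∈ C_c(𝒢)` the matrix coefficient
`x ↦ ⟨λ(x) f(s x), h(r x)⟩_{ℓ²(𝒢^{r x})}` equals `(conj h) * (conj (f*))` and lies in
`C_c(𝒢) ⊆ B_c(𝒢)`. -/
theorem left_regular_is_Bc_representation (g : EtaleGroupoid G) :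
    (∀ (E : Type) [NormedAddCommGroup E] [InnerProductSpace ℂ E] [MeasurableSpace E]
      (π : GRep g E), IsLeftRegularRep g π → π.IsDRep g.Bc) ∧
    (∀ f h : G → ℂ, g.IsCc f → g.IsCc h →
      ((fun x : G => ∑' y : g.rFiber (g.r x),
          f (g.mul (g.inv x) (y : G)) * conj (h (y : G))) =
        g.conv (fun y => conj (h y)) (fun z => conj (g.star' f z))) ∧
      g.IsCc (fun x : G => ∑' y : g.rFiber (g.r x),
        f (g.mul (g.inv x) (y : G)) * conj (h (y : G))) ∧
      (fun x : G => ∑' y : g.rFiber (g.r x),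
        f (g.mul (g.inv x) (y : G)) * conj (h (y : G))) ∈ g.Bc) := by
  refine ⟨?_, fun f h hf hh => ⟨g.leftRegCoeff_eq_conv f h, g.isCc_leftRegCoeff hf hh,
    (g.isCc_leftRegCoeff hf hh).mem_Bc⟩⟩
  rintro E _ _ _ π ⟨fs, hfs, -, σ, hσ, hcoeff⟩
  exact ⟨σ, hσ, fun n m => hcoeff n m ▸ (g.isCc_leftRegCoeff (hfs n) (hfs m)).mem_Bc⟩

end Statements
end
end
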